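/- arXiv:hep-th/0212075 — 3 statements merged into one kernel-verified Lean document; each statement's English description precedes it below -/
import Mathlib

section
/- For every integer N ≥ 0 and every integer n with −N ≤ n ≤ N, the function F_{Nn} is harmonic on ℝ³ ∖ {0}: for every x ≠ 0, ∂₁²F_{Nn}(x) + ∂₂²F_{Nn}(x) + ∂₃²F_{Nn}(x) = 0. -/
/-! The coordinate derivatives `∂₁, ∂₂, ∂₃` commute on smooth functions, hence commute with the
Laplacian, so they, and the constant-coefficient combinations `∂` and `∂̄` of them, map functions
harmonic on an open set to harmonic functions. It therefore suffices that `1/r` is harmonic off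
the origin, which is the case `p = -1` of `Δ rᵖ = p (p + 1) rᵖ⁻²` in `ℝ³`. -/

open Real Finset

noncomputable section

/-- `ℝ³` with the Euclidean norm. -/
abbrev E3 : Type := EuclideanSpace ℝ (Fin 3)

/-- Partial derivative `∂ᵢ` of a complex-valued function on `ℝ³`. -/
def pd (i : Fin 3) (f : E3 → ℂ) : E3 → ℂ :=
  fun x => fderiv ℝ f x (EuclideanSpace.single i 1)

/-- The complex derivative `∂ = (1/2)(∂₁ - i∂₂)`. -/
def cd (f : E3 → ℂ) : E3 → ℂ :=
  fun x => (1 / 2 : ℂ) * (pd 0 f x - Complex.I * pd 1 f x)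

/-- The complex derivative `∂̄ = (1/2)(∂₁ + i∂₂)`. -/
def cdbar (f : E3 → ℂ) : E3 → ℂ :=
  fun x => (1 / 2 : ℂ) * (pd 0 f x + Complex.I * pd 1 f x)

/-- `1/r`, the Coulomb potential centred at the origin. -/
def invr : E3 → ℂ := fun x => ((‖x‖ : ℝ) : ℂ)⁻¹

/-- `F_{Nn} = ∂̄ⁿ ∂₃^{N-n} (1/r)` for `n ≥ 0`, and
`F_{Nn} = ∂^{-n} ∂₃^{N+n} (1/r)` for `n < 0`. -/
def Fnn (N : ℕ) (n : ℤ) : E3 → ℂ :=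
  if 0 ≤ n then cdbar^[n.toNat] ((pd 2)^[((N : ℤ) - n).toNat] invr)
  else cd^[(-n).toNat] ((pd 2)^[((N : ℤ) + n).toNat] invr)

open scoped ContDiff Topology

def coordLaplacian (f : E3 → ℂ) (x : E3) : ℂ := ∑ i, pd i (pd i f) x

-- Smoothness is part of the definition so that the class is closed under every `∂ᵢ`.
def IsHarmonicOn (f : E3 → ℂ) (U : Set E3) : Prop :=
  ContDiffOn ℝ ∞ f U ∧ ∀ x ∈ U, coordLaplacian f x = 0

section PartialDerivatives

variable {f g : E3 → ℂ} {x : E3}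

theorem HasFDerivAt.pd_eq {f' : E3 →L[ℝ] ℂ} (h : HasFDerivAt f f' x) (i : Fin 3) :
    pd i f x = f' (EuclideanSpace.single i 1) := by
  simp only [pd, h.fderiv]

theorem pd_congr_of_eventuallyEq (h : f =ᶠ[𝓝 x] g) (i : Fin 3) : pd i f x = pd i g x := by
  simp only [pd, h.fderiv_eq]

theorem pd_const (c : ℂ) (i : Fin 3) : pd i (fun _ => c) x = 0 := by
  simp [pd]

theorem pd_const_mul_add_const_mul (hf : DifferentiableAt ℝ f x) (hg : DifferentiableAt ℝ g x)
    (a b : ℂ) (i : Fin 3) : pd i (fun y => a * f y + b * g y) x = a * pd i f x + b * pd i g x := by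
  rw [((hf.hasFDerivAt.const_mul a).fun_add (hg.hasFDerivAt.const_mul b)).pd_eq i]
  simp [pd]

theorem pd_sum {ι : Type*} {s : Finset ι} {F : ι → E3 → ℂ}
    (hF : ∀ i ∈ s, DifferentiableAt ℝ (F i) x) (k : Fin 3) :
    pd k (fun y => ∑ i ∈ s, F i y) x = ∑ i ∈ s, pd k (F i) x := by
  rw [(HasFDerivAt.fun_sum fun i hi => (hF i hi).hasFDerivAt).pd_eq k]
  simp [pd]

theorem pd_ofReal {r : E3 → ℝ} {r' : E3 →L[ℝ] ℝ} (h : HasFDerivAt r r' x) (i : Fin 3) :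
    pd i (fun y => (r y : ℂ)) x = r' (EuclideanSpace.single i 1) :=
  (Complex.ofRealCLM.hasFDerivAt.comp x h).pd_eq i

theorem ContDiffOn.pd {U : Set E3} (hf : ContDiffOn ℝ ∞ f U) (hU : IsOpen U) (i : Fin 3) :
    ContDiffOn ℝ ∞ (pd i f) U :=
  (ContinuousLinearMap.apply ℝ ℂ (EuclideanSpace.single i 1)).contDiff.comp_contDiffOn
    (hf.fderiv_of_isOpen hU (by norm_num))

theorem pd_pd_eq_fderiv_fderiv (hf : DifferentiableAt ℝ (fderiv ℝ f) x) (i j : Fin 3) :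
    pd i (pd j f) x =
      fderiv ℝ (fderiv ℝ f) x (EuclideanSpace.single i 1) (EuclideanSpace.single j 1) := by
  show fderiv ℝ (fun y => fderiv ℝ f y (EuclideanSpace.single j 1)) x _ = _
  simp [fderiv_clm_apply hf (differentiableAt_const _)]

theorem pd_pd_comm (hf : ContDiffAt ℝ 2 f x) (i j : Fin 3) :
    pd i (pd j f) x = pd j (pd i f) x := by
  have hf' : DifferentiableAt ℝ (fderiv ℝ f) x :=
    (hf.fderiv_right (m := 1) (by norm_num)).differentiableAt (by norm_num)
  rw [pd_pd_eq_fderiv_fderiv hf', pd_pd_eq_fderiv_fderiv hf', hf.isSymmSndFDerivAt (by simp)]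

end PartialDerivatives

section Laplacian

variable {f g : E3 → ℂ} {U : Set E3} {x : E3}

theorem ContDiffOn.contDiffAt_two (hf : ContDiffOn ℝ ∞ f U) (hU : IsOpen U) (hx : x ∈ U) :
    ContDiffAt ℝ 2 f x :=
  (hf.contDiffAt (hU.mem_nhds hx)).of_le (WithTop.coe_le_coe.mpr le_top)

theorem coordLaplacian_const_mul_add_const_mul (hU : IsOpen U) (hf : ContDiffOn ℝ ∞ f U)
    (hg : ContDiffOn ℝ ∞ g U) (hx : x ∈ U) (a b : ℂ) :
    coordLaplacian (fun y => a * f y + b * g y) x =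
      a * coordLaplacian f x + b * coordLaplacian g x := by
  have hdiff {h : E3 → ℂ} (hh : ContDiffOn ℝ ∞ h U) {y : E3} (hy : y ∈ U) :
      DifferentiableAt ℝ h y :=
    (hh.contDiffAt_two hU hy).differentiableAt (by norm_num)
  have step (i : Fin 3) : pd i (pd i (fun y => a * f y + b * g y)) x =
      a * pd i (pd i f) x + b * pd i (pd i g) x := by
    have hpd : pd i (fun y => a * f y + b * g y) =ᶠ[𝓝 x]
        fun y => a * pd i f y + b * pd i g y := by
      filter_upwards [hU.mem_nhds hx] with y hy
      exact pd_const_mul_add_const_mul (hdiff hf hy) (hdiff hg hy) a b i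
    rw [pd_congr_of_eventuallyEq hpd,
      pd_const_mul_add_const_mul (hdiff (hf.pd hU i) hx) (hdiff (hg.pd hU i) hx)]
  simp only [coordLaplacian, step, Finset.sum_add_distrib, Finset.mul_sum]

theorem coordLaplacian_pd (hU : IsOpen U) (hf : ContDiffOn ℝ ∞ f U) (hx : x ∈ U) (k : Fin 3) :
    coordLaplacian (pd k f) x = pd k (coordLaplacian f) x := by
  have step (i : Fin 3) : pd i (pd i (pd k f)) x = pd k (pd i (pd i f)) x :=
    calc pd i (pd i (pd k f)) x = pd i (pd k (pd i f)) x := by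
          refine pd_congr_of_eventuallyEq ?_ i
          filter_upwards [hU.mem_nhds hx] with y hy using pd_pd_comm (hf.contDiffAt_two hU hy) i k
      _ = pd k (pd i (pd i f)) x := pd_pd_comm ((hf.pd hU i).contDiffAt_two hU hx) i k
  unfold coordLaplacian
  rw [Finset.sum_congr rfl fun i _ => step i, pd_sum]
  exact fun i _ => (((hf.pd hU i).pd hU i).contDiffAt_two hU hx).differentiableAt (by norm_num)

end Laplacian

section Harmonic

variable {f g : E3 → ℂ} {U : Set E3}

theorem IsHarmonicOn.pd (hU : IsOpen U) (hf : IsHarmonicOn f U) (k : Fin 3) :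
    IsHarmonicOn (pd k f) U := by
  refine ⟨hf.1.pd hU k, fun x hx => ?_⟩
  have hzero : coordLaplacian f =ᶠ[𝓝 x] fun _ => 0 := by
    filter_upwards [hU.mem_nhds hx] with y hy using hf.2 y hy
  rw [coordLaplacian_pd hU hf.1 hx, pd_congr_of_eventuallyEq hzero, pd_const]

theorem IsHarmonicOn.const_mul_add_const_mul (hU : IsOpen U) (hf : IsHarmonicOn f U)
    (hg : IsHarmonicOn g U) (a b : ℂ) : IsHarmonicOn (fun y => a * f y + b * g y) U :=
  ⟨(contDiffOn_const.mul hf.1).add (contDiffOn_const.mul hg.1), fun x hx => by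
    rw [coordLaplacian_const_mul_add_const_mul hU hf.1 hg.1 hx, hf.2 x hx, hg.2 x hx]; ring⟩

theorem IsHarmonicOn.cdbar (hU : IsOpen U) (hf : IsHarmonicOn f U) : IsHarmonicOn (cdbar f) U := by
  convert (hf.pd hU 0).const_mul_add_const_mul hU (hf.pd hU 1) (1 / 2) (Complex.I / 2) using 1
  ext y; simp only [_root_.cdbar]; ring

theorem IsHarmonicOn.cd (hU : IsOpen U) (hf : IsHarmonicOn f U) : IsHarmonicOn (cd f) U := by
  convert (hf.pd hU 0).const_mul_add_const_mul hU (hf.pd hU 1) (1 / 2) (-Complex.I / 2) using 1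
  ext y; simp only [_root_.cd]; ring

end Harmonic

section Radial

variable {x : E3}

theorem hasFDerivAt_norm_rpow_of_ne_zero {E : Type*} [NormedAddCommGroup E]
    [InnerProductSpace ℝ E] (p : ℝ) {x : E} (hx : x ≠ 0) :
    HasFDerivAt (fun y : E => ‖y‖ ^ p) ((p * ‖x‖ ^ (p - 2)) • innerSL ℝ x) x := by
  apply HasStrictFDerivAt.hasFDerivAt
  convert! (hasStrictFDerivAt_norm_sq x).rpow_const (p := p / 2) (by simp [hx]) using 0
  simp_rw [← Real.rpow_natCast_mul (norm_nonneg _), ← Nat.cast_smul_eq_nsmul ℝ, smul_smul]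
  ring_nf

theorem pd_norm_rpow (p : ℝ) (hx : x ≠ 0) (i : Fin 3) :
    pd i (fun y => ((‖y‖ ^ p : ℝ) : ℂ)) x = ((p * ‖x‖ ^ (p - 2) * x i : ℝ) : ℂ) := by
  rw [pd_ofReal (hasFDerivAt_norm_rpow_of_ne_zero p hx)]
  simp [EuclideanSpace.inner_single_right]

theorem pd_const_mul_norm_rpow_mul_coord (c q : ℝ) (hx : x ≠ 0) (i : Fin 3) :
    pd i (fun y => ((c * ‖y‖ ^ q * y i : ℝ) : ℂ)) x =
      ((c * (q * ‖x‖ ^ (q - 2) * x i ^ 2 + ‖x‖ ^ q) : ℝ) : ℂ) := by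
  have h : HasFDerivAt (fun y : E3 => c * ‖y‖ ^ q * y i) _ x :=
    ((hasFDerivAt_norm_rpow_of_ne_zero q hx).const_mul c).fun_mul
      (EuclideanSpace.proj (𝕜 := ℝ) i).hasFDerivAt
  rw [pd_ofReal h]
  simp [EuclideanSpace.inner_single_right]
  ring

theorem coordLaplacian_norm_rpow (p : ℝ) (hx : x ≠ 0) :
    coordLaplacian (fun y => ((‖y‖ ^ p : ℝ) : ℂ)) x =
      ((p * (p + 1) * ‖x‖ ^ (p - 2) : ℝ) : ℂ) := by
  have hpd (i : Fin 3) : pd i (fun y => ((‖y‖ ^ p : ℝ) : ℂ)) =ᶠ[𝓝 x]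
      fun y => ((p * ‖y‖ ^ (p - 2) * y i : ℝ) : ℂ) := by
    filter_upwards [isOpen_compl_singleton.mem_nhds hx] with y hy using pd_norm_rpow p hy i
  have hr : 0 < ‖x‖ := norm_pos_iff.mpr hx
  have hpow : ‖x‖ ^ (p - 2 - 2) * ‖x‖ ^ 2 = ‖x‖ ^ (p - 2) := by
    rw [Real.rpow_sub hr, ← Real.rpow_natCast, Nat.cast_ofNat, div_mul_cancel₀ _ (by positivity)]
  have hsq : x 0 ^ 2 + x 1 ^ 2 + x 2 ^ 2 = ‖x‖ ^ 2 := by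
    rw [EuclideanSpace.real_norm_sq_eq, Fin.sum_univ_three]
  simp only [coordLaplacian, pd_congr_of_eventuallyEq (hpd _),
    pd_const_mul_norm_rpow_mul_coord _ _ hx]
  rw [← Complex.ofReal_sum, Fin.sum_univ_three]
  congr 1
  linear_combination (p * (p - 2) * ‖x‖ ^ (p - 2 - 2)) * hsq + p * (p - 2) * hpow

end Radial

theorem invr_eq_norm_rpow : invr = fun y => ((‖y‖ ^ (-1 : ℝ) : ℝ) : ℂ) := by
  funext y
  simp [invr, Real.rpow_neg_one]

theorem contDiffOn_invr : ContDiffOn ℝ ∞ invr {0}ᶜ := fun x hx =>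
  ((Complex.ofRealCLM.contDiff.contDiffAt.comp x (contDiffAt_norm ℝ hx)).inv
    (by simpa using hx)).contDiffWithinAt

theorem isHarmonicOn_invr : IsHarmonicOn invr {0}ᶜ :=
  ⟨contDiffOn_invr, fun x hx => by
    rw [invr_eq_norm_rpow, coordLaplacian_norm_rpow _ hx]
    norm_num⟩

theorem isHarmonicOn_Fnn (N : ℕ) (n : ℤ) : IsHarmonicOn (Fnn N n) {0}ᶜ := by
  have hU : IsOpen ({0}ᶜ : Set E3) := isOpen_compl_singleton
  have hpd2 (m : ℕ) : IsHarmonicOn ((pd 2)^[m] invr) {0}ᶜ :=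
    Function.Iterate.rec _ isHarmonicOn_invr (fun _ hf => hf.pd hU 2) m
  unfold Fnn
  split_ifs
  · exact Function.Iterate.rec _ (hpd2 _) (fun _ hf => hf.cdbar hU) _
  · exact Function.Iterate.rec _ (hpd2 _) (fun _ hf => hf.cd hU) _

theorem Fnn_harmonic_general (N : ℕ) (n : ℤ) :
    ∀ x : E3, x ≠ 0 →
      pd 0 (pd 0 (Fnn N n)) x + pd 1 (pd 1 (Fnn N n)) x + pd 2 (pd 2 (Fnn N n)) x = 0 := by
  intro x hx
  have h := (isHarmonicOn_Fnn N n).2 x hx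
  rwa [coordLaplacian, Fin.sum_univ_three] at h

/-- Each `F_{Nn}` is harmonic on `ℝ³ \ {0}`. -/
theorem Fnn_harmonic (N : ℕ) (n : ℤ) (h1 : -(N : ℤ) ≤ n) (h2 : n ≤ (N : ℤ)) :
    ∀ x : E3, x ≠ 0 →
      pd 0 (pd 0 (Fnn N n)) x + pd 1 (pd 1 (Fnn N n)) x + pd 2 (pd 2 (Fnn N n)) x = 0 :=
  Fnn_harmonic_general N n
end
end

section
/- For every integer N ≥ 0 and every integer n with −N ≤ n ≤ N, the function F_{Nn} is an eigenfunction of the generator of rotations about the x₃-axis with eigenvalue n: for every x ∈ ℝ³ ∖ {0}, −i(x₁ ∂₂F_{Nn}(x) − x₂ ∂₁F_{Nn}(x)) = n · F_{Nn}(x). -/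
open Real Finset

noncomputable section

/-!
Write `w = x₁ + εx₂` with `ε² = -1`. The rotation generator `x₁∂₂ - x₂∂₁` kills `x₃` and `r` and
sends `w` to `εw`, so `wᵐ x₃ᵃ rᵇ` is an eigenfunction of `J₃` with eigenvalue `-iεm`. The operator
`∂₃` keeps `m` fixed, while `(1/2)(∂₁ + ε∂₂)` kills `w` and sends `rᵇ` to `(b/2) w r^{b-2}`, raising
`m` by one. Since `1/r` is the case `m = 0`, `F_{Nn}` is a combination of such functions with
`m = |n|`, where `ε = i` for `n ≥ 0` (`∂̄`) and `ε = -i` for `n < 0` (`∂`); in both cases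
`-iεm = n`.
-/

theorem hasFDerivAt_norm_of_ne_zero {F : Type*} [NormedAddCommGroup F] [InnerProductSpace ℝ F]
    {x : F} (hx : x ≠ 0) : HasFDerivAt (‖·‖) (‖x‖⁻¹ • innerSL ℝ x) x := by
  have h := (hasStrictFDerivAt_norm_sq x).hasFDerivAt.sqrt (by positivity)
  simp only [Real.sqrt_sq (norm_nonneg _)] at h
  refine h.congr_fderiv ?_
  ext v
  simp
  ring

def diffOp (c : Fin 3 → E3 → ℂ) (c₀ : E3 → ℂ) (f : E3 → ℂ) (x : E3) : ℂ :=
  ∑ i, c i x * pd i f x + c₀ x * f x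

def raiseOp (ε : ℂ) (f : E3 → ℂ) (x : E3) : ℂ :=
  (1 / 2 : ℂ) * (pd 0 f x + ε * pd 1 f x)

def J3 (f : E3 → ℂ) (x : E3) : ℂ :=
  -Complex.I * ((x 0 : ℂ) * pd 1 f x - (x 1 : ℂ) * pd 0 f x)

theorem cdbar_eq_raiseOp : cdbar = raiseOp Complex.I := rfl

theorem cd_eq_raiseOp : cd = raiseOp (-Complex.I) := by
  ext f x
  simp only [cd, raiseOp, neg_mul, sub_eq_add_neg]

theorem pd_two_eq_diffOp : pd 2 = diffOp (fun i _ => if i = 2 then 1 else 0) 0 := by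
  ext f x
  simp [diffOp]

theorem raiseOp_eq_diffOp (ε : ℂ) : raiseOp ε = diffOp ![fun _ => 1 / 2, fun _ => ε / 2, 0] 0 := by
  ext f x
  simp [diffOp, raiseOp, Fin.sum_univ_three]
  ring

theorem J3_sub_smul_eq_diffOp (f : E3 → ℂ) (μ : ℂ) :
    J3 f - μ • f =
      diffOp ![fun x => Complex.I * x 1, fun x => -Complex.I * x 0, 0] (fun _ => -μ) f := by
  ext x
  simp [diffOp, J3, Fin.sum_univ_three]
  ring

def cylMonomial (ε : ℂ) (m a : ℕ) (b : ℤ) (x : E3) : ℂ :=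
  ((x 0 : ℂ) + ε * x 1) ^ m * (x 2 : ℂ) ^ a * (‖x‖ : ℂ) ^ b

section cylMonomial

variable (ε : ℂ) (m a : ℕ) (b : ℤ) {x : E3}

theorem hasFDerivAt_cylMonomial (hx : x ≠ 0) :
    HasFDerivAt (cylMonomial ε m a b)
      ((m * ((x 0 : ℂ) + ε * x 1) ^ (m - 1) * (x 2 : ℂ) ^ a * (‖x‖ : ℂ) ^ b) •
          (Complex.ofRealCLM ∘L EuclideanSpace.proj 0 +
            ε • Complex.ofRealCLM ∘L EuclideanSpace.proj 1)
        + (a * ((x 0 : ℂ) + ε * x 1) ^ m * (x 2 : ℂ) ^ (a - 1) * (‖x‖ : ℂ) ^ b) •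
          Complex.ofRealCLM ∘L EuclideanSpace.proj 2
        + (b * ((x 0 : ℂ) + ε * x 1) ^ m * (x 2 : ℂ) ^ a * (‖x‖ : ℂ) ^ (b - 2)) •
          Complex.ofRealCLM ∘L innerSL ℝ x) x := by
  have hr : (‖x‖ : ℂ) ≠ 0 := by simpa using hx
  have hcoord (i : Fin 3) : HasFDerivAt (fun y : E3 => (y i : ℂ))
      (Complex.ofRealCLM ∘L EuclideanSpace.proj i) x :=
    (Complex.ofRealCLM ∘L EuclideanSpace.proj i).hasFDerivAt
  have hw := ((hcoord 0).add ((hcoord 1).const_mul ε)).pow m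
  have hX := (hcoord 2).pow a
  have hR := (hasDerivAt_zpow b _ (Or.inl hr)).comp_hasFDerivAt x
    (Complex.ofRealCLM.hasFDerivAt.comp x (hasFDerivAt_norm_of_ne_zero hx))
  have h : HasFDerivAt (cylMonomial ε m a b) _ x := (hw.mul hX).mul hR
  refine h.congr_fderiv ?_
  rw [show b - 2 = b - 1 - 1 by ring, zpow_sub_one₀ hr (b - 1)]
  ext v
  simp
  ring

theorem pd_two_cylMonomial (hx : x ≠ 0) :
    pd 2 (cylMonomial ε m a b) x =
      a * cylMonomial ε m (a - 1) b x + b * cylMonomial ε m (a + 1) (b - 2) x := by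
  rw [pd, (hasFDerivAt_cylMonomial ε m a b hx).fderiv]
  simp [cylMonomial, EuclideanSpace.inner_single_right]
  ring

variable {ε}

theorem raiseOp_cylMonomial (hε : ε ^ 2 = -1) (hx : x ≠ 0) :
    raiseOp ε (cylMonomial ε m a b) x = b / 2 * cylMonomial ε (m + 1) a (b - 2) x := by
  simp only [raiseOp, pd, (hasFDerivAt_cylMonomial ε m a b hx).fderiv]
  simp [cylMonomial, EuclideanSpace.inner_single_right]
  linear_combination (m * ((x 0 : ℂ) + ε * x 1) ^ (m - 1) * (x 2 : ℂ) ^ a * (‖x‖ : ℂ) ^ b / 2) * hε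

theorem J3_cylMonomial (hε : ε ^ 2 = -1) (hx : x ≠ 0) :
    J3 (cylMonomial ε m a b) x = -Complex.I * ε * m * cylMonomial ε m a b x := by
  simp only [J3, pd, (hasFDerivAt_cylMonomial ε m a b hx).fderiv]
  simp [cylMonomial, EuclideanSpace.inner_single_right]
  rcases m with _ | m
  · ring
  · simp only [Nat.add_sub_cancel, pow_succ]
    push_cast
    linear_combination (-Complex.I * (m + 1) * (x 1 : ℂ) * ((x 0 : ℂ) + ε * x 1) ^ m
      * (x 2 : ℂ) ^ a * (‖x‖ : ℂ) ^ b) * hε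

end cylMonomial

def vanishingOffOrigin : Submodule ℂ (E3 → ℂ) :=
  LinearMap.ker (LinearMap.funLeft ℂ ℂ ((↑) : ({0}ᶜ : Set E3) → E3))

theorem mem_vanishingOffOrigin {f : E3 → ℂ} : f ∈ vanishingOffOrigin ↔ ∀ x ≠ 0, f x = 0 := by
  simp [vanishingOffOrigin, funext_iff, LinearMap.funLeft]

theorem mem_of_eq_off_origin {T : Submodule ℂ (E3 → ℂ)} (hT : vanishingOffOrigin ≤ T)
    {f g : E3 → ℂ} (hg : g ∈ T) (h : ∀ x ≠ 0, f x = g x) : f ∈ T := by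
  have hfg : f - g ∈ T := hT (mem_vanishingOffOrigin.2 fun x hx => sub_eq_zero.2 (h x hx))
  simpa using T.add_mem hfg hg

theorem eventuallyEq_zero_of_mem_vanishingOffOrigin {f : E3 → ℂ} (hf : f ∈ vanishingOffOrigin)
    {x : E3} (hx : x ≠ 0) : f =ᶠ[nhds x] 0 := by
  filter_upwards [isOpen_compl_singleton.mem_nhds hx] with y hy
  exact mem_vanishingOffOrigin.1 hf y hy

section diffOp

variable {c : Fin 3 → E3 → ℂ} {c₀ : E3 → ℂ} {f g : E3 → ℂ} {x : E3}

theorem diffOp_add_apply (hf : DifferentiableAt ℝ f x) (hg : DifferentiableAt ℝ g x) :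
    diffOp c c₀ (f + g) x = diffOp c c₀ f x + diffOp c c₀ g x := by
  simp only [diffOp, pd, fderiv_add hf hg, add_apply, Pi.add_apply, mul_add,
    Finset.sum_add_distrib]
  ring

theorem diffOp_smul_apply (a : ℂ) (hf : DifferentiableAt ℝ f x) :
    diffOp c c₀ (a • f) x = a * diffOp c c₀ f x := by
  simp only [diffOp, pd, fderiv_const_smul hf, smul_apply, Pi.smul_apply, smul_eq_mul,
    mul_add, Finset.mul_sum, mul_left_comm a]

theorem diffOp_mem_vanishingOffOrigin (hf : f ∈ vanishingOffOrigin) :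
    diffOp c c₀ f ∈ vanishingOffOrigin := by
  refine mem_vanishingOffOrigin.2 fun x hx => ?_
  have hpd (i : Fin 3) : pd i f x = 0 := by
    simp [pd, (eventuallyEq_zero_of_mem_vanishingOffOrigin hf hx).fderiv_eq]
  simp [diffOp, hpd, mem_vanishingOffOrigin.1 hf x hx]

end diffOp

/-- Functions vanishing off the origin are included because `pd i f 0` is a junk value, so the
operators below preserve the span only away from `0`. -/
def cylSpace (ε : ℂ) (m : ℕ) : Submodule ℂ (E3 → ℂ) :=
  Submodule.span ℂ
    (Set.range (fun p : ℕ × ℤ => cylMonomial ε m p.1 p.2) ∪ vanishingOffOrigin)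

section cylSpace

variable {ε : ℂ} {m : ℕ} {f : E3 → ℂ}

theorem cylMonomial_mem_cylSpace (a : ℕ) (b : ℤ) : cylMonomial ε m a b ∈ cylSpace ε m :=
  Submodule.subset_span (Or.inl ⟨(a, b), rfl⟩)

theorem vanishingOffOrigin_le_cylSpace : vanishingOffOrigin ≤ cylSpace ε m :=
  fun _ hf => Submodule.subset_span (Or.inr hf)

theorem differentiableAt_of_mem_cylSpace (hf : f ∈ cylSpace ε m) {x : E3} (hx : x ≠ 0) :
    DifferentiableAt ℝ f x := by
  induction hf using Submodule.span_induction with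
  | mem g hg =>
    rcases hg with ⟨⟨a, b⟩, rfl⟩ | hg
    · exact (hasFDerivAt_cylMonomial ε m a b hx).differentiableAt
    · exact (differentiableAt_const 0).congr_of_eventuallyEq
        (eventuallyEq_zero_of_mem_vanishingOffOrigin hg hx)
  | zero => exact differentiableAt_const 0
  | add g h _ _ hg hh => exact hg.add hh
  | smul a g _ hg => exact hg.const_smul a

theorem diffOp_mem_of_mem_cylSpace {c : Fin 3 → E3 → ℂ} {c₀ : E3 → ℂ}
    {T : Submodule ℂ (E3 → ℂ)} (hT : vanishingOffOrigin ≤ T)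
    (hmono : ∀ a b, diffOp c c₀ (cylMonomial ε m a b) ∈ T) (hf : f ∈ cylSpace ε m) :
    diffOp c c₀ f ∈ T := by
  induction hf using Submodule.span_induction with
  | mem g hg =>
    rcases hg with ⟨⟨a, b⟩, rfl⟩ | hg
    · exact hmono a b
    · exact hT (diffOp_mem_vanishingOffOrigin hg)
  | zero => exact hT (diffOp_mem_vanishingOffOrigin (zero_mem _))
  | add g h hg hh ihg ihh =>
    exact mem_of_eq_off_origin hT (T.add_mem ihg ihh) fun x hx =>
      diffOp_add_apply (differentiableAt_of_mem_cylSpace hg hx)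
        (differentiableAt_of_mem_cylSpace hh hx)
  | smul a g hg ihg =>
    exact mem_of_eq_off_origin hT (T.smul_mem a ihg) fun x hx =>
      diffOp_smul_apply a (differentiableAt_of_mem_cylSpace hg hx)

theorem pd_two_mem_cylSpace (hf : f ∈ cylSpace ε m) : pd 2 f ∈ cylSpace ε m := by
  rw [pd_two_eq_diffOp]
  refine diffOp_mem_of_mem_cylSpace vanishingOffOrigin_le_cylSpace (fun a b => ?_) hf
  rw [← pd_two_eq_diffOp]
  refine mem_of_eq_off_origin vanishingOffOrigin_le_cylSpace
    (add_mem (Submodule.smul_mem _ (a : ℂ) (cylMonomial_mem_cylSpace (a - 1) b))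
      (Submodule.smul_mem _ (b : ℂ) (cylMonomial_mem_cylSpace (a + 1) (b - 2)))) fun x hx => ?_
  simp [pd_two_cylMonomial ε m a b hx]

theorem raiseOp_mem_cylSpace (hε : ε ^ 2 = -1) (hf : f ∈ cylSpace ε m) :
    raiseOp ε f ∈ cylSpace ε (m + 1) := by
  rw [raiseOp_eq_diffOp]
  refine diffOp_mem_of_mem_cylSpace vanishingOffOrigin_le_cylSpace (fun a b => ?_) hf
  rw [← raiseOp_eq_diffOp]
  refine mem_of_eq_off_origin vanishingOffOrigin_le_cylSpace
    (Submodule.smul_mem _ ((b : ℂ) / 2) (cylMonomial_mem_cylSpace a (b - 2))) fun x hx => ?_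
  simp [raiseOp_cylMonomial m a b hε hx]

theorem J3_eq_of_mem_cylSpace (hε : ε ^ 2 = -1) (hf : f ∈ cylSpace ε m) {x : E3} (hx : x ≠ 0) :
    J3 f x = -Complex.I * ε * m * f x := by
  have h : J3 f - (-Complex.I * ε * m) • f ∈ vanishingOffOrigin := by
    rw [J3_sub_smul_eq_diffOp]
    refine diffOp_mem_of_mem_cylSpace le_rfl (fun a b => ?_) hf
    rw [← J3_sub_smul_eq_diffOp, mem_vanishingOffOrigin]
    intro y hy
    simp [J3_cylMonomial m a b hε hy]
  exact sub_eq_zero.1 (mem_vanishingOffOrigin.1 h x hx)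

theorem iterate_raiseOp_mem_cylSpace (hε : ε ^ 2 = -1) (hf : f ∈ cylSpace ε m) (k : ℕ) :
    (raiseOp ε)^[k] f ∈ cylSpace ε (m + k) := by
  induction k with
  | zero => exact hf
  | succ k ih =>
    rw [Function.iterate_succ_apply', ← add_assoc]
    exact raiseOp_mem_cylSpace hε ih

theorem invr_mem_cylSpace : invr ∈ cylSpace ε 0 := by
  convert cylMonomial_mem_cylSpace (ε := ε) (m := 0) 0 (-1) using 1
  ext x
  simp [invr, cylMonomial]

end cylSpace

theorem J3_iterate_raiseOp_iterate_pd_two_invr {ε : ℂ} (hε : ε ^ 2 = -1) (k j : ℕ) {x : E3}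
    (hx : x ≠ 0) :
    J3 ((raiseOp ε)^[k] ((pd 2)^[j] invr)) x
      = -Complex.I * ε * k * (raiseOp ε)^[k] ((pd 2)^[j] invr) x := by
  have hpd : (pd 2)^[j] invr ∈ cylSpace ε 0 :=
    Set.MapsTo.iterate (fun _ => pd_two_mem_cylSpace) j invr_mem_cylSpace
  simpa using J3_eq_of_mem_cylSpace hε (iterate_raiseOp_mem_cylSpace hε hpd k) hx

theorem Fnn_J3_eigenfunction_general (N : ℕ) (n : ℤ) :
    ∀ x : E3, x ≠ 0 →
      -Complex.I * ((x 0 : ℂ) * pd 1 (Fnn N n) x - (x 1 : ℂ) * pd 0 (Fnn N n) x)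
        = (n : ℂ) * Fnn N n x := by
  intro x hx
  change J3 (Fnn N n) x = _
  rcases le_or_gt 0 n with hn | hn
  · have hk : ((n.toNat : ℕ) : ℂ) = n := by exact_mod_cast Int.toNat_of_nonneg hn
    simp only [Fnn, if_pos hn, cdbar_eq_raiseOp]
    rw [J3_iterate_raiseOp_iterate_pd_two_invr Complex.I_sq _ _ hx, hk, neg_mul, Complex.I_mul_I,
      neg_neg, one_mul]
  · have hk : (((-n).toNat : ℕ) : ℂ) = -n := by exact_mod_cast Int.toNat_of_nonneg (by omega)
    simp only [Fnn, if_neg hn.not_ge, cd_eq_raiseOp]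
    rw [J3_iterate_raiseOp_iterate_pd_two_invr ((neg_sq _).trans Complex.I_sq) _ _ hx, hk,
      neg_mul_neg, Complex.I_mul_I, neg_one_mul, neg_neg]

/-- Each `F_{Nn}` is an eigenfunction of the generator
`J₃ f = -i(x₁ ∂₂f - x₂ ∂₁f)` of rotations about the `x₃`-axis, with
eigenvalue `n`. -/
theorem Fnn_J3_eigenfunction (N : ℕ) (n : ℤ) (h1 : -(N : ℤ) ≤ n) (h2 : n ≤ (N : ℤ)) :
    ∀ x : E3, x ≠ 0 →
      -Complex.I * ((x 0 : ℂ) * pd 1 (Fnn N n) x - (x 1 : ℂ) * pd 0 (Fnn N n) x)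
        = (n : ℂ) * Fnn N n x :=
  Fnn_J3_eigenfunction_general N n
end
end

section
/- Let A, B be 2×2 complex matrices that are skew-Hermitian, i.e. A† = −A and B† = −B. Then tr([A,B][A,B]†) ≤ 2 · tr(AA†) · tr(BB†); equivalently, since [A,B] is again skew-Hermitian, −(1/8) tr([A,B][A,B]) ≤ (1/4) tr(AA) tr(BB), both sides being real. -/
open Matrix
open scoped ComplexOrder

lemma skew_canon (A : Matrix (Fin 2) (Fin 2) ℂ) (hA : Aᴴ = -A) :
    ∃ a x y d : ℝ, A = !![Complex.I*a, ⟨x,y⟩; ⟨-x,y⟩, Complex.I*d] := by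
  refine ⟨(A 0 0).im, (A 0 1).re, (A 0 1).im, (A 1 1).im, ?_⟩
  have h00 : (starRingEnd ℂ) (A 0 0) = -A 0 0 := congrFun (congrFun hA 0) 0
  have h11 : (starRingEnd ℂ) (A 1 1) = -A 1 1 := congrFun (congrFun hA 1) 1
  have h01 : (starRingEnd ℂ) (A 1 0) = -A 0 1 := congrFun (congrFun hA 0) 1
  rw [Complex.ext_iff] at h00 h11 h01
  simp [Complex.conj_re, Complex.conj_im] at h00 h11 h01
  ext i j
  fin_cases i <;> fin_cases j <;>
    simp [Complex.ext_iff, Complex.mul_im, Complex.mul_re]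
  all_goals first | linarith | exact h01

/-- For skew-Hermitian `2 × 2` complex matrices `A`, `B` one has
`tr([A,B][A,B]†) ≤ 2 tr(AA†) tr(BB†)`; equivalently (since `[A,B]` is again
skew-Hermitian) `-(1/8) tr([A,B][A,B]) ≤ (1/4) tr(AA) tr(BB)`, both sides
being real (the inequalities are stated in the complex order, which entails
that both sides are real). -/
theorem commutator_trace_ineq_of_skewHermitian (A B : Matrix (Fin 2) (Fin 2) ℂ)
    (hA : Aᴴ = -A) (hB : Bᴴ = -B) :
    ((A * B - B * A) * (A * B - B * A)ᴴ).trace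
      ≤ 2 * (A * Aᴴ).trace * (B * Bᴴ).trace ∧
    -(1 / 8 : ℂ) * ((A * B - B * A) * (A * B - B * A)).trace
      ≤ (1 / 4 : ℂ) * ((A * A).trace * (B * B).trace) := by
  have h1 : ((A * B - B * A) * (A * B - B * A)ᴴ).trace
      ≤ 2 * (A * Aᴴ).trace * (B * Bᴴ).trace := by
    obtain ⟨a, x, y, d, rfl⟩ := skew_canon A hA
    obtain ⟨b, u, v, e, rfl⟩ := skew_canon B hB
    rw [Complex.le_def]
    simp only [Matrix.trace, Matrix.diag, Matrix.mul_apply, Matrix.conjTranspose_apply,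
      Fin.sum_univ_two, Matrix.sub_apply, Matrix.cons_val', Matrix.cons_val_zero,
      Matrix.cons_val_one, Matrix.head_cons, Matrix.head_fin_const, Matrix.empty_val',
      Matrix.cons_val_fin_one, Matrix.of_apply,
      Complex.add_re, Complex.add_im, Complex.sub_re, Complex.sub_im,
      Complex.mul_re, Complex.mul_im, Complex.conj_re, Complex.conj_im,
      Complex.I_re, Complex.I_im, Complex.ofReal_re, Complex.ofReal_im,
      Complex.neg_re, Complex.neg_im]
    norm_num
    constructor
    · nlinarith [sq_nonneg ((a-d)*(e-b) - 4*(x*u+y*v)),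
        mul_nonneg (sq_nonneg (a+d)) (sq_nonneg (b+e)),
        mul_nonneg (sq_nonneg (a+d)) (sq_nonneg (b-e)),
        mul_nonneg (sq_nonneg (b+e)) (sq_nonneg (a-d)),
        mul_nonneg (sq_nonneg (a+d)) (add_nonneg (sq_nonneg u) (sq_nonneg v)),
        mul_nonneg (sq_nonneg (b+e)) (add_nonneg (sq_nonneg x) (sq_nonneg y))]
    · ring
  refine ⟨h1, ?_⟩
  have hC : (A * B - B * A)ᴴ = -(A * B - B * A) := by
    simp [Matrix.conjTranspose_mul, hA, hB]
  have eC : ((A * B - B * A) * (A * B - B * A)ᴴ).trace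
      = -((A * B - B * A) * (A * B - B * A)).trace := by
    rw [hC, Matrix.mul_neg, Matrix.trace_neg]
  have eA : (A * Aᴴ).trace = -(A * A).trace := by rw [hA]; simp
  have eB : (B * Bᴴ).trace = -(B * B).trace := by rw [hB]; simp
  have h8 : (0 : ℂ) ≤ 1/8 := by
    rw [Complex.le_def]; norm_num
  calc -(1 / 8 : ℂ) * ((A * B - B * A) * (A * B - B * A)).trace
      = (1/8 : ℂ) * ((A * B - B * A) * (A * B - B * A)ᴴ).trace := by rw [eC]; ring
    _ ≤ (1/8 : ℂ) * (2 * (A * Aᴴ).trace * (B * Bᴴ).trace) :=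
        mul_le_mul_of_nonneg_left h1 h8
    _ = (1 / 4 : ℂ) * ((A * A).trace * (B * B).trace) := by rw [eA, eB]; ring
end
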